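/- A right comodule U over a K-coalgebra C is a finitely generated object of the category M^C (i.e., the functor Hom_{M^C}(U, −) preserves filtered colimits of systems of monomorphisms) if and only if U is finite dimensional as a K-vector space. -/

import Mathlib

open TensorProduct CategoryTheory CategoryTheory.Limits

universe u

set_option maxHeartbeats 1000000
noncomputable section

namespace Formal

variable (K : Type u) [Field K]

structure Comod (C : Type u) [AddCommGroup C] [Module K C] [Coalgebra K C] :
    Type (u + 1) where
  carrier : Type u
  [acg : AddCommGroup carrier]
  [mod : Module K carrier]
  ρ : carrier →ₗ[K] carrier ⊗[K] C
  counit_comp' :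
    (TensorProduct.rid K carrier).toLinearMap ∘ₗ
      LinearMap.lTensor carrier (Coalgebra.counit (R := K) (A := C)) ∘ₗ ρ = LinearMap.id
  coassoc' :
    (TensorProduct.assoc K carrier C C).toLinearMap ∘ₗ LinearMap.rTensor C ρ ∘ₗ ρ =
      LinearMap.lTensor carrier (Coalgebra.comul (R := K) (A := C)) ∘ₗ ρ

attribute [instance] Comod.acg Comod.mod

variable {K}
variable {C D E : Type u}
  [AddCommGroup C] [Module K C] [Coalgebra K C]
  [AddCommGroup D] [Module K D] [Coalgebra K D]
  [AddCommGroup E] [Module K E] [Coalgebra K E]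

@[ext]
structure ComodHom (M N : Comod K C) : Type u where
  f : M.carrier →ₗ[K] N.carrier
  compat : N.ρ ∘ₗ f = LinearMap.rTensor C f ∘ₗ M.ρ

instance : Category (Comod K C) where
  Hom := ComodHom
  id M := ⟨LinearMap.id, by rw [LinearMap.comp_id, LinearMap.rTensor_id, LinearMap.id_comp]⟩
  comp {M N P} g h :=
    ⟨h.f ∘ₗ g.f, by
      rw [← LinearMap.comp_assoc, h.compat, LinearMap.comp_assoc, g.compat,
        ← LinearMap.comp_assoc, ← LinearMap.rTensor_comp]⟩
  id_comp f := by apply ComodHom.ext; exact LinearMap.comp_id _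
  comp_id f := by apply ComodHom.ext; exact LinearMap.id_comp _
  assoc f g h := by apply ComodHom.ext; exact (LinearMap.comp_assoc _ _ _).symm

@[simp] lemma ComodHom.id_f (M : Comod K C) : (𝟙 M : M ⟶ M).f = LinearMap.id := rfl

@[simp] lemma ComodHom.comp_f {M N P : Comod K C} (g : M ⟶ N) (h : N ⟶ P) :
    (g ≫ h).f = h.f ∘ₗ g.f := rfl

section Cores

variable (α : C →ₗc[K] D) (M : Comod K C)

/-- The coaction of the corestricted comodule. -/
def coresρ : M.carrier →ₗ[K] M.carrier ⊗[K] D :=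
  LinearMap.lTensor M.carrier α.toLinearMap ∘ₗ M.ρ

lemma cores_counit :
    (TensorProduct.rid K M.carrier).toLinearMap ∘ₗ
      LinearMap.lTensor M.carrier (Coalgebra.counit (R := K) (A := D)) ∘ₗ coresρ α M =
      LinearMap.id := by
  rw [coresρ, ← LinearMap.comp_assoc M.ρ, ← LinearMap.lTensor_comp, α.counit_comp]
  exact M.counit_comp'

lemma cores_coassoc :
    (TensorProduct.assoc K M.carrier D D).toLinearMap ∘ₗ
      LinearMap.rTensor D (coresρ α M) ∘ₗ coresρ α M =
      LinearMap.lTensor M.carrier (Coalgebra.comul (R := K) (A := D)) ∘ₗ coresρ α M := by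
  set A := α.toLinearMap
  have h1 : LinearMap.rTensor D (coresρ α M) ∘ₗ coresρ α M =
      (TensorProduct.map (LinearMap.lTensor M.carrier A) A ∘ₗ LinearMap.rTensor C M.ρ) ∘ₗ M.ρ := by
    rw [LinearMap.map_comp_rTensor]
    rw [coresρ, ← LinearMap.comp_assoc M.ρ, LinearMap.rTensor_comp_lTensor]
  have h2 : (TensorProduct.assoc K M.carrier D D).toLinearMap ∘ₗ
      TensorProduct.map (LinearMap.lTensor M.carrier A) A =
      LinearMap.lTensor M.carrier (TensorProduct.map A A) ∘ₗ
        (TensorProduct.assoc K M.carrier C C).toLinearMap := by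
    have := TensorProduct.map_map_comp_assoc_eq (R := K)
      (f := (LinearMap.id : M.carrier →ₗ[K] M.carrier)) (g := A) (h := A)
    calc (TensorProduct.assoc K M.carrier D D).toLinearMap ∘ₗ
        TensorProduct.map (LinearMap.lTensor M.carrier A) A
        = (TensorProduct.assoc K M.carrier D D).toLinearMap ∘ₗ
            TensorProduct.map (TensorProduct.map LinearMap.id A) A := rfl
      _ = TensorProduct.map LinearMap.id (TensorProduct.map A A) ∘ₗ
            (TensorProduct.assoc K M.carrier C C).toLinearMap := this.symm
      _ = LinearMap.lTensor M.carrier (TensorProduct.map A A) ∘ₗ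
            (TensorProduct.assoc K M.carrier C C).toLinearMap := rfl
  conv_lhs => rw [h1]
  simp only [← LinearMap.comp_assoc]
  rw [h2]
  simp only [LinearMap.comp_assoc]
  rw [M.coassoc', ← LinearMap.comp_assoc, ← LinearMap.lTensor_comp, α.map_comp_comul,
    LinearMap.lTensor_comp, LinearMap.comp_assoc]
  rfl

/-- Corestriction of scalars along a coalgebra morphism, as a functor. -/
def cores : Comod K C ⥤ Comod K D where
  obj M :=
    { carrier := M.carrier
      ρ := coresρ α M
      counit_comp' := cores_counit α M
      coassoc' := cores_coassoc α M }
  map {M N} f := ⟨f.f, by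
    show coresρ α N ∘ₗ f.f = LinearMap.rTensor D f.f ∘ₗ coresρ α M
    rw [coresρ, coresρ, LinearMap.comp_assoc, f.compat, ← LinearMap.comp_assoc,
      ← LinearMap.comp_assoc, LinearMap.lTensor_comp_rTensor, LinearMap.rTensor_comp_lTensor]⟩
  map_id M := by apply ComodHom.ext; rfl
  map_comp f g := by apply ComodHom.ext; rfl

@[simp] lemma cores_obj_carrier (M : Comod K C) : ((cores α).obj M).carrier = M.carrier := rfl
@[simp] lemma cores_map_f {M N : Comod K C} (f : M ⟶ N) : ((cores α).map f).f = f.f := rfl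

end Cores

/-- The left coaction of `C` as a left `D`-comodule via `α`. -/
def lcoaction (α : C →ₗc[K] D) : C →ₗ[K] D ⊗[K] C :=
  LinearMap.rTensor C α.toLinearMap ∘ₗ Coalgebra.comul

/-- The cotensor product `N □_D C` as a submodule of `N ⊗ C`. -/
def cotensor (α : C →ₗc[K] D) (N : Comod K D) : Submodule K (N.carrier ⊗[K] C) :=
  LinearMap.ker
    ((TensorProduct.assoc K N.carrier D C).toLinearMap ∘ₗ LinearMap.rTensor C N.ρ -
      LinearMap.lTensor N.carrier (lcoaction α))


section Rep

variable {X : Type u} [SmallCategory X]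
variable (K)
variable (Cx : X → Type u) [∀ x, AddCommGroup (Cx x)] [∀ x, Module K (Cx x)]
  [∀ x, Coalgebra K (Cx x)]
variable (F : ∀ {x y : X}, (x ⟶ y) → (Cx x →ₗc[K] Cx y))

/-- A cis-comodule over a coalgebra representation. -/
structure Cis : Type (u + 1) where
  M : ∀ x, Comod K (Cx x)
  str : ∀ {x y : X} (a : x ⟶ y), (cores (F a)).obj (M x) ⟶ M y
  str_id : ∀ x, (str (𝟙 x)).f = LinearMap.id
  str_comp : ∀ {x y z : X} (a : x ⟶ y) (b : y ⟶ z),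
    (str (a ≫ b)).f = (str b).f ∘ₗ (str a).f

/-- A trans-comodule over a coalgebra representation (via the corestriction-side
structure maps `_αM : M_y → α^* M_x` for `α : x ⟶ y`). -/
structure Trans : Type (u + 1) where
  M : ∀ x, Comod K (Cx x)
  str : ∀ {x y : X} (a : x ⟶ y), M y ⟶ (cores (F a)).obj (M x)
  str_id : ∀ x, (str (𝟙 x)).f = LinearMap.id
  str_comp : ∀ {x y z : X} (a : x ⟶ y) (b : y ⟶ z),
    (str (a ≫ b)).f = (str a).f ∘ₗ (str b).f

variable {K Cx F}

@[ext]
structure CisHom (P Q : Cis K Cx (F := @F)) : Type u where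
  η : ∀ x, P.M x ⟶ Q.M x
  nat : ∀ {x y : X} (a : x ⟶ y), (η y).f ∘ₗ (P.str a).f = (Q.str a).f ∘ₗ (η x).f

@[ext]
structure TransHom (P Q : Trans K Cx (F := @F)) : Type u where
  η : ∀ x, P.M x ⟶ Q.M x
  nat : ∀ {x y : X} (a : x ⟶ y), (η x).f ∘ₗ (P.str a).f = (Q.str a).f ∘ₗ (η y).f

instance : Category (Cis K Cx (F := @F)) where
  Hom := CisHom
  id P := ⟨fun x => 𝟙 (P.M x), fun a => by
    exact LinearMap.ext fun v => rfl⟩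
  comp g h := ⟨fun x => g.η x ≫ h.η x, fun {x y} a => by
    simp only [ComodHom.comp_f]
    refine LinearMap.ext fun v => ?_
    have h1 := LinearMap.congr_fun (g.nat a) v
    have h2 := LinearMap.congr_fun (h.nat a) ((g.η x).f v)
    exact Eq.trans (congrArg (h.η y).f h1) h2⟩
  id_comp f := by apply CisHom.ext; funext x; exact Category.id_comp _
  comp_id f := by apply CisHom.ext; funext x; exact Category.comp_id _
  assoc f g h := by apply CisHom.ext; funext x; exact Category.assoc _ _ _

instance : Category (Trans K Cx (F := @F)) where
  Hom := TransHom
  id P := ⟨fun x => 𝟙 (P.M x), fun a => by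
    exact LinearMap.ext fun v => rfl⟩
  comp g h := ⟨fun x => g.η x ≫ h.η x, fun {x y} a => by
    simp only [ComodHom.comp_f]
    refine LinearMap.ext fun v => ?_
    have h1 := LinearMap.congr_fun (g.nat a) v
    have h2 := LinearMap.congr_fun (h.nat a) ((g.η y).f v)
    exact Eq.trans (congrArg (h.η x).f h1) h2⟩
  id_comp f := by apply TransHom.ext; funext x; exact Category.id_comp _
  comp_id f := by apply TransHom.ext; funext x; exact Category.comp_id _
  assoc f g h := by apply TransHom.ext; funext x; exact Category.assoc _ _ _

@[simp] lemma CisHom.id_η (P : Cis K Cx (F := @F)) (x : X) :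
    (𝟙 P : P ⟶ P).η x = 𝟙 (P.M x) := rfl

@[simp] lemma CisHom.comp_η {P Q R : Cis K Cx (F := @F)} (g : P ⟶ Q) (h : Q ⟶ R) (x : X) :
    (g ≫ h).η x = g.η x ≫ h.η x := rfl

@[simp] lemma TransHom.id_η (P : Trans K Cx (F := @F)) (x : X) :
    (𝟙 P : P ⟶ P).η x = 𝟙 (P.M x) := rfl

@[simp] lemma TransHom.comp_η {P Q R : Trans K Cx (F := @F)} (g : P ⟶ Q) (h : Q ⟶ R) (x : X) :
    (g ≫ h).η x = g.η x ≫ h.η x := rfl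

variable (K Cx F)

/-- Evaluation of cis-comodules at an object. -/
def evCis (x : X) : Cis K Cx (F := @F) ⥤ Comod K (Cx x) where
  obj P := P.M x
  map g := g.η x
  map_id _ := rfl
  map_comp _ _ := rfl

/-- Evaluation of trans-comodules at an object. -/
def evTrans (x : X) : Trans K Cx (F := @F) ⥤ Comod K (Cx x) where
  obj P := P.M x
  map g := g.η x
  map_id _ := rfl
  map_comp _ _ := rfl

end Rep

end Formal
end

namespace Formal
noncomputable section

open TensorProduct

variable {K : Type u} [Field K] {C : Type u}
  [AddCommGroup C] [Module K C] [Coalgebra K C]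

section TensorHelpers

variable {A B : Type u} [AddCommGroup A] [Module K A] [AddCommGroup B] [Module K B]

lemma rid_natural (f : A →ₗ[K] B) :
    f ∘ₗ (TensorProduct.rid K A).toLinearMap =
      (TensorProduct.rid K B).toLinearMap ∘ₗ LinearMap.rTensor K f := by
  apply TensorProduct.ext'
  intro a k
  simp

lemma assoc_natural (f : A →ₗ[K] B) (P Q : Type u)
    [AddCommGroup P] [Module K P] [AddCommGroup Q] [Module K Q] :
    (TensorProduct.assoc K B P Q).toLinearMap ∘ₗ
        LinearMap.rTensor Q (LinearMap.rTensor P f) =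
      LinearMap.rTensor (P ⊗[K] Q) f ∘ₗ (TensorProduct.assoc K A P Q).toLinearMap := by
  apply TensorProduct.ext_threefold
  intro a p q
  simp

lemma rTensor_inj (f : A →ₗ[K] B) (hf : Function.Injective f) (P : Type u)
    [AddCommGroup P] [Module K P] :
    Function.Injective (LinearMap.rTensor P f) :=
  Module.Flat.rTensor_preserves_injective_linearMap (M := P) f hf

end TensorHelpers

section Sub

variable (M : Comod K C)

/-- A submodule is a subcomodule if it is stable under the coaction. -/
def IsSubcomod (N : Submodule K M.carrier) : Prop :=
  ∀ x ∈ N, M.ρ x ∈ LinearMap.range (LinearMap.rTensor C N.subtype)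

variable {M} {N : Submodule K M.carrier} (h : IsSubcomod M N)

/-- The coaction on a subcomodule. -/
def subρ : N →ₗ[K] N ⊗[K] C :=
  (LinearEquiv.ofInjective (LinearMap.rTensor C N.subtype)
      (rTensor_inj N.subtype N.injective_subtype C)).symm.toLinearMap ∘ₗ
    LinearMap.codRestrict (LinearMap.range (LinearMap.rTensor C N.subtype))
      (M.ρ ∘ₗ N.subtype) (fun x => h x.1 x.2)

lemma subρ_spec :
    LinearMap.rTensor C N.subtype ∘ₗ subρ h = M.ρ ∘ₗ N.subtype := by
  apply LinearMap.ext
  intro x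
  set i := LinearMap.rTensor C N.subtype
  set e := LinearEquiv.ofInjective i (rTensor_inj N.subtype N.injective_subtype C)
  have key : ∀ y : LinearMap.range i, i (e.symm y) = (y : M.carrier ⊗[K] C) := by
    intro y
    have : (e (e.symm y) : M.carrier ⊗[K] C) = (y : M.carrier ⊗[K] C) := by
      rw [e.apply_symm_apply]
    rwa [LinearEquiv.ofInjective_apply] at this
  exact key _

lemma sub_counit :
    (TensorProduct.rid K N).toLinearMap ∘ₗ
      LinearMap.lTensor N (Coalgebra.counit (R := K) (A := C)) ∘ₗ subρ h =
      LinearMap.id := by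
  have c1 := rid_natural (K := K) N.subtype
  have c2 : LinearMap.rTensor K N.subtype ∘ₗ
      LinearMap.lTensor N (Coalgebra.counit (R := K) (A := C)) =
      LinearMap.lTensor M.carrier (Coalgebra.counit (R := K) (A := C)) ∘ₗ
        LinearMap.rTensor C N.subtype := by
    rw [LinearMap.rTensor_comp_lTensor, LinearMap.lTensor_comp_rTensor]
  have c3 := subρ_spec h
  apply LinearMap.ext
  intro x
  apply N.injective_subtype
  have s1 := LinearMap.congr_fun c1 (LinearMap.lTensor N
    (Coalgebra.counit (R := K) (A := C)) (subρ h x))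
  have s2 := LinearMap.congr_fun c2 (subρ h x)
  have s3 := LinearMap.congr_fun c3 x
  have s4 := LinearMap.congr_fun M.counit_comp' (N.subtype x)
  simp only [LinearMap.comp_apply, LinearMap.id_apply] at s1 s2 s3 s4 ⊢
  rw [s1, s2, s3, s4]

lemma sub_coassoc :
    (TensorProduct.assoc K N C C).toLinearMap ∘ₗ
        LinearMap.rTensor C (subρ h) ∘ₗ subρ h =
      LinearMap.lTensor N (Coalgebra.comul (R := K) (A := C)) ∘ₗ subρ h := by
  have hinj : Function.Injective (LinearMap.rTensor (C ⊗[K] C) N.subtype) :=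
    rTensor_inj N.subtype N.injective_subtype (C ⊗[K] C)
  have a1 := (assoc_natural (K := K) N.subtype C C).symm
  have c3 := subρ_spec h
  have crt : LinearMap.rTensor C (LinearMap.rTensor C N.subtype) ∘ₗ
      LinearMap.rTensor C (subρ h) = LinearMap.rTensor C (M.ρ ∘ₗ N.subtype) := by
    rw [← LinearMap.rTensor_comp, c3]
  have c2 : LinearMap.rTensor (C ⊗[K] C) N.subtype ∘ₗ
      LinearMap.lTensor N (Coalgebra.comul (R := K) (A := C)) =
      LinearMap.lTensor M.carrier (Coalgebra.comul (R := K) (A := C)) ∘ₗ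
        LinearMap.rTensor C N.subtype := by
    rw [LinearMap.rTensor_comp_lTensor, LinearMap.lTensor_comp_rTensor]
  apply LinearMap.ext
  intro x
  apply hinj
  have s1 := LinearMap.congr_fun a1 (LinearMap.rTensor C (subρ h) (subρ h x))
  have s2 := LinearMap.congr_fun crt (subρ h x)
  have s3 := LinearMap.congr_fun c3 x
  have s4 := LinearMap.congr_fun (LinearMap.rTensor_comp C M.ρ N.subtype) (subρ h x)
  have s5 := LinearMap.congr_fun c2 (subρ h x)
  have s6 := LinearMap.congr_fun M.coassoc' (N.subtype x)
  simp only [LinearMap.comp_apply] at s1 s2 s3 s4 s5 s6 ⊢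
  rw [s1, s2, s4, s3, s6, s5, s3]

/-- The subcomodule as an object of the comodule category. -/
def Comod.sub : Comod K C where
  carrier := N
  ρ := subρ h
  counit_comp' := sub_counit h
  coassoc' := sub_coassoc h

/-- The inclusion of a subcomodule. -/
def subIncl : Comod.sub h ⟶ M :=
  ⟨N.subtype, (subρ_spec h).symm⟩

@[simp] lemma subIncl_f : (subIncl h).f = N.subtype := rfl

end Sub

section MonoInj

variable {M N : Comod K C}

/-- The zero morphism of comodules. -/
def zeroHom (M N : Comod K C) : M ⟶ N :=
  ⟨0, by
    ext x
    simp⟩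

lemma mono_of_injective (f : M ⟶ N) (hf : Function.Injective f.f) : Mono f := by
  constructor
  intro Z g h H
  apply ComodHom.ext
  apply LinearMap.ext
  intro x
  apply hf
  have := congrArg ComodHom.f H
  exact LinearMap.congr_fun this x

lemma injective_of_mono (f : M ⟶ N) [Mono f] : Function.Injective f.f := by
  set Q := LinearMap.ker f.f with hQ
  have hstab : IsSubcomod M Q := by
    intro x hx
    have hexact := Module.Flat.rTensor_exact (M := C) (R := K)
      (LinearMap.exact_subtype_ker_map f.f)
    have hker : LinearMap.rTensor C f.f (M.ρ x) = 0 := by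
      have := LinearMap.congr_fun f.compat x
      simp only [LinearMap.comp_apply] at this
      rw [← this]
      have hx0 : f.f x = 0 := hx
      rw [hx0, map_zero]
    exact (hexact (M.ρ x)).mp hker
  have hcomp : subIncl hstab ≫ f = zeroHom _ _ ≫ f := by
    apply ComodHom.ext
    apply LinearMap.ext
    intro x
    simp only [ComodHom.comp_f, LinearMap.comp_apply]
    show f.f (Q.subtype x) = f.f ((0 : (Comod.sub hstab).carrier →ₗ[K] M.carrier) x)
    have : f.f x.1 = 0 := x.2
    simpa [zeroHom] using this
  have := (cancel_mono f).mp hcomp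
  have hsub : Q.subtype = 0 := congrArg ComodHom.f this
  rw [← LinearMap.ker_eq_bot]
  apply (Submodule.eq_bot_iff _).mpr
  intro x hx
  have : Q.subtype ⟨x, hx⟩ = 0 := by rw [hsub]; rfl
  simpa using this

/-- Cancel an injective comodule morphism. -/
lemma cancel_injective {P Q R : Comod K C} (ι : Q ⟶ R) (hι : Function.Injective ι.f)
    {g₁ g₂ : P ⟶ Q} (H : g₁ ≫ ι = g₂ ≫ ι) : g₁ = g₂ := by
  apply ComodHom.ext
  apply LinearMap.ext
  intro x
  apply hι
  have := congrArg ComodHom.f H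
  exact LinearMap.congr_fun this x

/-- Lifting a comodule morphism through an injective comodule morphism. -/
lemma lift_of_injective {P Q R : Comod K C} (ι : Q ⟶ R) (hι : Function.Injective ι.f)
    (g : P ⟶ R) (hr : ∀ x, g.f x ∈ LinearMap.range ι.f) :
    ∃ h : P ⟶ Q, h ≫ ι = g := by
  set e := LinearEquiv.ofInjective ι.f hι
  set hf : P.carrier →ₗ[K] Q.carrier :=
    e.symm.toLinearMap ∘ₗ LinearMap.codRestrict (LinearMap.range ι.f) g.f hr with hfdef
  have hcomp : ι.f ∘ₗ hf = g.f := by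
    apply LinearMap.ext
    intro x
    have key : ∀ y : LinearMap.range ι.f, ι.f (e.symm y) = (y : R.carrier) := by
      intro y
      have : (e (e.symm y) : R.carrier) = (y : R.carrier) := by rw [e.apply_symm_apply]
      rwa [LinearEquiv.ofInjective_apply] at this
    exact key _
  have hcompat : Q.ρ ∘ₗ hf = LinearMap.rTensor C hf ∘ₗ P.ρ := by
    apply LinearMap.ext
    intro x
    apply rTensor_inj ι.f hι C
    have e1 : LinearMap.rTensor C ι.f ∘ₗ Q.ρ ∘ₗ hf =
        LinearMap.rTensor C ι.f ∘ₗ (LinearMap.rTensor C hf ∘ₗ P.ρ) := by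
      rw [← LinearMap.comp_assoc, ← ι.compat, LinearMap.comp_assoc, hcomp,
        ← LinearMap.comp_assoc, ← LinearMap.rTensor_comp, hcomp, g.compat]
    have := LinearMap.congr_fun e1 x
    simpa only [LinearMap.comp_apply] using this
  refine ⟨⟨hf, hcompat⟩, ?_⟩
  apply ComodHom.ext
  exact hcomp

end MonoInj

end
noncomputable section
open TensorProduct

variable {K : Type u} [Field K] {C : Type u}
  [AddCommGroup C] [Module K C] [Coalgebra K C]

theorem exists_findim_subcomod (M : Comod K C) (u : M.carrier) :
    ∃ N : Submodule K M.carrier, IsSubcomod M N ∧ FiniteDimensional K N ∧ u ∈ N := by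
  classical
  set ι := Module.Basis.ofVectorSpaceIndex K C with hι
  set b : Module.Basis ι K C := Module.Basis.ofVectorSpace K C with hb
  set e : M.carrier ⊗[K] C ≃ₗ[K] (ι →₀ M.carrier) :=
    (LinearEquiv.lTensor M.carrier b.repr).trans
      (TensorProduct.finsuppScalarRight K K M.carrier ι) with he
  have e_tmul : ∀ (x : M.carrier) (k : ι), e (x ⊗ₜ[K] b k) = Finsupp.single k x := by
    intro x k
    simp only [he, LinearEquiv.trans_apply, LinearEquiv.lTensor_tmul]
    rw [Module.Basis.repr_self, TensorProduct.finsuppScalarRight_apply_tmul]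
    simp
  set m : ι →₀ M.carrier := e (M.ρ u) with hm
  have hρ : M.ρ u = m.sum fun k x => x ⊗ₜ[K] b k := by
    apply e.injective
    rw [map_finsuppSum]
    simp only [e_tmul]
    rw [Finsupp.sum_single, hm]
  set s : Finset M.carrier := m.support.image m with hs
  set N : Submodule K M.carrier := Submodule.span K (s : Set M.carrier) with hN
  have hmem : ∀ k, m k ∈ N := by
    intro k
    by_cases hk : k ∈ m.support
    · exact Submodule.subset_span (Finset.mem_coe.mpr (Finset.mem_image_of_mem m hk))
    · rw [Finsupp.notMem_support_iff.mp hk]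
      exact N.zero_mem
  have findim : FiniteDimensional K N := by
    rw [hN]
    infer_instance
  -- the key computation coming from coassociativity
  set ψ : ι → (C ⊗[K] C →ₗ[K] C) := fun l =>
    (TensorProduct.rid K C).toLinearMap ∘ₗ LinearMap.lTensor C (b.coord l) with hψ
  have key : ∀ l, M.ρ (m l) = m.sum fun k x => x ⊗ₜ[K] (ψ l) (Coalgebra.comul (b k)) := by
    intro l
    have co := LinearMap.congr_fun M.coassoc' u
    simp only [LinearMap.comp_apply] at co
    set Φ : M.carrier ⊗[K] (C ⊗[K] C) →ₗ[K] M.carrier ⊗[K] C :=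
      LinearMap.lTensor M.carrier (ψ l) with hΦ
    have glemma : ∀ (t : M.carrier ⊗[K] C) (k : ι),
        Φ ((TensorProduct.assoc K M.carrier C C) (t ⊗ₜ[K] b k)) =
          (b.repr (b k)) l • t := by
      intro t k
      have : (Φ ∘ₗ (TensorProduct.assoc K M.carrier C C).toLinearMap ∘ₗ
          (TensorProduct.mk K (M.carrier ⊗[K] C) C).flip (b k)) =
          (b.repr (b k)) l • LinearMap.id := by
        apply TensorProduct.ext'
        intro x c
        simp [hΦ, hψ, TensorProduct.assoc_tmul, TensorProduct.rid_tmul,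
          TensorProduct.smul_tmul', TensorProduct.tmul_smul]
      have := LinearMap.congr_fun this t
      simpa only [LinearMap.comp_apply, TensorProduct.mk_apply, LinearMap.flip_apply,
        LinearMap.smul_apply, LinearMap.id_apply, LinearEquiv.coe_coe] using this
    have lhs : Φ ((TensorProduct.assoc K M.carrier C C)
        (LinearMap.rTensor C M.ρ (M.ρ u))) = M.ρ (m l) := by
      rw [hρ, map_finsuppSum, map_finsuppSum, map_finsuppSum]
      simp only [LinearMap.rTensor_tmul]
      have : (m.sum fun k x => Φ ((TensorProduct.assoc K M.carrier C C)
          ((M.ρ x) ⊗ₜ[K] b k))) = m.sum fun k x => (b.repr (b k)) l • M.ρ x := by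
        apply Finsupp.sum_congr
        intro k _
        rw [glemma]
      rw [this]
      have : (m.sum fun k x => (b.repr (b k)) l • M.ρ x) =
          m.sum fun k x => (if k = l then (1 : K) else 0) • M.ρ x := by
        apply Finsupp.sum_congr
        intro k _
        rw [Module.Basis.repr_self, Finsupp.single_apply]
      rw [this]
      rw [Finsupp.sum_eq_single l (fun k _ hkl => by rw [if_neg hkl, zero_smul])
        (fun _ => by simp)]
      rw [if_pos rfl, one_smul]
    have rhs : Φ (LinearMap.lTensor M.carrier (Coalgebra.comul (R := K) (A := C)) (M.ρ u)) =
        m.sum fun k x => x ⊗ₜ[K] (ψ l) (Coalgebra.comul (b k)) := by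
      rw [hρ, map_finsuppSum, map_finsuppSum]
      apply Finsupp.sum_congr
      intro k _
      simp only [LinearMap.lTensor_tmul, hΦ]
    rw [← lhs, ← rhs]
    exact congrArg Φ co
  have hstab : IsSubcomod M N := by
    intro x hx
    induction hx using Submodule.span_induction with
    | mem g hg =>
      obtain ⟨k, _, rfl⟩ := Finset.mem_image.mp hg
      rw [key k]
      rw [Finsupp.sum]
      apply Submodule.sum_mem
      intro k' _
      exact ⟨(⟨m k', hmem k'⟩ : N) ⊗ₜ[K] (ψ k) (Coalgebra.comul (b k')), rfl⟩
    | zero => rw [map_zero]; exact Submodule.zero_mem _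
    | add y z _ _ hy hz => rw [map_add]; exact Submodule.add_mem _ hy hz
    | smul a y _ hy => rw [map_smul]; exact Submodule.smul_mem _ a hy
  refine ⟨N, hstab, findim, ?_⟩
  have hu : u = m.sum fun k x => (Coalgebra.counit (R := K) (A := C)) (b k) • x := by
    have hc := LinearMap.congr_fun M.counit_comp' u
    simp only [LinearMap.comp_apply, LinearMap.id_apply] at hc
    rw [hρ, map_finsuppSum, map_finsuppSum] at hc
    simp only [LinearMap.lTensor_tmul] at hc
    rw [← hc]
    apply Finsupp.sum_congr
    intro k _
    simp
  rw [hu, Finsupp.sum]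
  exact Submodule.sum_mem _ fun k _ => N.smul_mem _ (hmem k)

end
noncomputable section
open TensorProduct

variable {K : Type u} [Field K] {C : Type u}
  [AddCommGroup C] [Module K C] [Coalgebra K C]

section FwdDiagram

lemma range_rTensor_mono {M : Comod K C} {N N' : Submodule K M.carrier} (hle : N ≤ N') :
    LinearMap.range (LinearMap.rTensor C N.subtype) ≤
      LinearMap.range (LinearMap.rTensor C N'.subtype) := by
  intro y hy
  obtain ⟨t, rfl⟩ := hy
  refine ⟨LinearMap.rTensor C (Submodule.inclusion hle) t, ?_⟩
  rw [← LinearMap.comp_apply, ← LinearMap.rTensor_comp]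
  congr 1

lemma IsSubcomod.sup {M : Comod K C} {N₁ N₂ : Submodule K M.carrier}
    (h₁ : IsSubcomod M N₁) (h₂ : IsSubcomod M N₂) : IsSubcomod M (N₁ ⊔ N₂) := by
  intro x hx
  have : N₁ ⊔ N₂ ≤ Submodule.comap M.ρ
      (LinearMap.range (LinearMap.rTensor C (N₁ ⊔ N₂).subtype)) := by
    apply sup_le
    · intro z hz
      exact range_rTensor_mono le_sup_left (h₁ z hz)
    · intro z hz
      exact range_rTensor_mono le_sup_right (h₂ z hz)
  exact this hx

variable (U : Comod K C)

/-- The poset of finite dimensional subcomodules of `U`. -/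
def FJ : Type u := {N : Submodule K U.carrier // IsSubcomod U N ∧ FiniteDimensional K N}

instance : PartialOrder (FJ U) :=
  inferInstanceAs (PartialOrder {N : Submodule K U.carrier // _})

instance : Nonempty (FJ U) :=
  ⟨⟨⊥, fun x hx => by
      simp only [Submodule.mem_bot] at hx
      subst hx
      rw [map_zero]
      exact Submodule.zero_mem _, inferInstance⟩⟩

instance : IsDirected (FJ U) (· ≤ ·) := by
  constructor
  intro a b
  haveI := a.2.2
  haveI := b.2.2
  exact ⟨⟨a.1 ⊔ b.1, a.2.1.sup b.2.1, inferInstance⟩,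
    (le_sup_left : a.1 ≤ a.1 ⊔ b.1), (le_sup_right : b.1 ≤ a.1 ⊔ b.1)⟩

instance : SmallCategory (FJ U) := Preorder.smallCategory _

instance : IsFiltered (FJ U) := inferInstance

/-- The inclusion of subcomodules as a comodule morphism. -/
def subInclHom {M : Comod K C} {N N' : Submodule K M.carrier}
    (h : IsSubcomod M N) (h' : IsSubcomod M N') (hle : N ≤ N') :
    Comod.sub h ⟶ Comod.sub h' := by
  refine ⟨Submodule.inclusion hle, ?_⟩
  apply LinearMap.ext
  intro x
  apply rTensor_inj N'.subtype N'.injective_subtype C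
  have s1 := LinearMap.congr_fun (subρ_spec h') (Submodule.inclusion hle x)
  have s2 := LinearMap.congr_fun (subρ_spec h) x
  simp only [LinearMap.comp_apply] at s1 s2 ⊢
  show LinearMap.rTensor C N'.subtype ((subρ h') ((Submodule.inclusion hle) x)) =
    LinearMap.rTensor C N'.subtype
      ((LinearMap.rTensor C (Submodule.inclusion hle)) ((subρ h) x))
  rw [s1]
  have hsub : N'.subtype (Submodule.inclusion hle x) = N.subtype x := rfl
  rw [hsub]
  refine s2.symm.trans ?_
  rw [← LinearMap.comp_apply (LinearMap.rTensor C N'.subtype), ← LinearMap.rTensor_comp]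
  have : N'.subtype ∘ₗ Submodule.inclusion hle = N.subtype := LinearMap.ext fun _ => rfl
  rw [this]
  rfl

/-- The filtered diagram of finite dimensional subcomodules. -/
def WFD : FJ U ⥤ Comod K C where
  obj N := Comod.sub N.2.1
  map {N N'} f := subInclHom N.2.1 N'.2.1 (leOfHom f)
  map_id N := by
    apply ComodHom.ext
    apply LinearMap.ext
    intro x
    rfl
  map_comp f g := by
    apply ComodHom.ext
    apply LinearMap.ext
    intro x
    rfl

/-- The canonical cocone on the diagram of finite dimensional subcomodules. -/
def ccFD : Cocone (WFD U) where
  pt := U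
  ι :=
    { app := fun N => subIncl N.2.1
      naturality := fun N N' f => by
        apply ComodHom.ext
        apply LinearMap.ext
        intro x
        rfl }

/-- Wrap an element in some finite dimensional subcomodule. -/
def someFJ (u : U.carrier) : FJ U :=
  ⟨(exists_findim_subcomod U u).choose, (exists_findim_subcomod U u).choose_spec.1,
    (exists_findim_subcomod U u).choose_spec.2.1⟩

lemma someFJ_mem (u : U.carrier) : u ∈ (someFJ U u).1 :=
  (exists_findim_subcomod U u).choose_spec.2.2

variable {U}

/-- Cocone leg, retyped. -/
def appS (s : Cocone (WFD U)) (N : FJ U) : (N.1 : Type u) →ₗ[K] s.pt.carrier :=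
  (s.ι.app N).f

lemma fd_consistent (s : Cocone (WFD U)) {N N' : FJ U} (u : U.carrier)
    (h : u ∈ N.1) (h' : u ∈ N'.1) :
    appS s N ⟨u, h⟩ = appS s N' ⟨u, h'⟩ := by
  haveI := N.2.2
  haveI := N'.2.2
  set P : FJ U := ⟨N.1 ⊔ N'.1, N.2.1.sup N'.2.1, inferInstance⟩ with hP
  have hNP : N ≤ P := (le_sup_left : N.1 ≤ N.1 ⊔ N'.1)
  have hN'P : N' ≤ P := (le_sup_right : N'.1 ≤ N.1 ⊔ N'.1)
  have e1 : appS s N ⟨u, h⟩ = appS s P ⟨u, hNP h⟩ := by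
    have hw := LinearMap.congr_fun (congrArg ComodHom.f (s.w (homOfLE hNP))) ⟨u, h⟩
    exact hw.symm
  have e2 : appS s N' ⟨u, h'⟩ = appS s P ⟨u, hN'P h'⟩ := by
    have hw := LinearMap.congr_fun (congrArg ComodHom.f (s.w (homOfLE hN'P))) ⟨u, h'⟩
    exact hw.symm
  rw [e1, e2]

variable (U)

/-- The linear descent map out of `U` to the point of a cocone. -/
def fdDesc (s : Cocone (WFD U)) : U.carrier →ₗ[K] s.pt.carrier where
  toFun u := appS s (someFJ U u) ⟨u, someFJ_mem U u⟩
  map_add' u v := by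
    haveI := (someFJ U u).2.2
    haveI := (someFJ U v).2.2
    set P : FJ U := ⟨(someFJ U u).1 ⊔ (someFJ U v).1,
      (someFJ U u).2.1.sup (someFJ U v).2.1, inferInstance⟩
    have hu : u ∈ P.1 := (le_sup_left : (someFJ U u).1 ≤ _) (someFJ_mem U u)
    have hv : v ∈ P.1 := (le_sup_right : (someFJ U v).1 ≤ _) (someFJ_mem U v)
    have huv : u + v ∈ P.1 := P.1.add_mem hu hv
    show appS s (someFJ U (u + v)) ⟨u + v, someFJ_mem U (u + v)⟩ =
      appS s (someFJ U u) ⟨u, someFJ_mem U u⟩ + appS s (someFJ U v) ⟨v, someFJ_mem U v⟩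
    rw [fd_consistent s (u + v) (someFJ_mem U (u + v)) huv,
      fd_consistent s u (someFJ_mem U u) hu, fd_consistent s v (someFJ_mem U v) hv]
    have : (⟨u + v, huv⟩ : P.1) = ⟨u, hu⟩ + ⟨v, hv⟩ := rfl
    rw [this, map_add]
  map_smul' a u := by
    have hau : a • u ∈ (someFJ U u).1 := (someFJ U u).1.smul_mem a (someFJ_mem U u)
    show appS s (someFJ U (a • u)) ⟨a • u, someFJ_mem U (a • u)⟩ =
      a • appS s (someFJ U u) ⟨u, someFJ_mem U u⟩
    rw [fd_consistent s (a • u) (someFJ_mem U (a • u)) hau]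
    have : (⟨a • u, hau⟩ : (someFJ U u).1) = a • ⟨u, someFJ_mem U u⟩ := rfl
    rw [this, map_smul]

lemma fdDesc_spec (s : Cocone (WFD U)) (N : FJ U) (u : U.carrier) (h : u ∈ N.1) :
    fdDesc U s u = appS s N ⟨u, h⟩ :=
  fd_consistent s u (someFJ_mem U u) h

/-- The cocone of finite dimensional subcomodules is a colimit. -/
def isColimitFD : IsColimit (ccFD U) where
  desc s := by
    refine ⟨fdDesc U s, ?_⟩
    apply LinearMap.ext
    intro u
    set N := someFJ U u with hNdef
    have hmem := someFJ_mem U u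
    obtain ⟨t, ht⟩ := N.2.1 u hmem
    have hcomp : fdDesc U s ∘ₗ N.1.subtype = appS s N := by
      apply LinearMap.ext
      intro x
      exact fdDesc_spec U s N x.1 x.2
    have compat : s.pt.ρ (appS s N ⟨u, hmem⟩) =
        LinearMap.rTensor C (appS s N) (subρ N.2.1 ⟨u, hmem⟩) := by
      have := LinearMap.congr_fun (s.ι.app N).compat ⟨u, hmem⟩
      exact this
    have htt : subρ N.2.1 ⟨u, hmem⟩ = t := by
      apply rTensor_inj N.1.subtype N.1.injective_subtype C
      have hs := LinearMap.congr_fun (subρ_spec N.2.1) ⟨u, hmem⟩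
      simp only [LinearMap.comp_apply] at hs
      rw [hs]
      exact ht.symm
    have h1 : fdDesc U s u = appS s N ⟨u, hmem⟩ := fdDesc_spec U s N u hmem
    show s.pt.ρ (fdDesc U s u) = LinearMap.rTensor C (fdDesc U s) (U.ρ u)
    calc s.pt.ρ (fdDesc U s u)
        = s.pt.ρ (appS s N ⟨u, hmem⟩) := by rw [h1]
      _ = LinearMap.rTensor C (appS s N) (subρ N.2.1 ⟨u, hmem⟩) := compat
      _ = LinearMap.rTensor C (appS s N) t := congrArg _ htt
      _ = LinearMap.rTensor C (fdDesc U s ∘ₗ N.1.subtype) t := by rw [hcomp]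
      _ = LinearMap.rTensor C (fdDesc U s) (LinearMap.rTensor C N.1.subtype t) := by
          rw [LinearMap.rTensor_comp]
          rfl
      _ = LinearMap.rTensor C (fdDesc U s) (U.ρ u) := by rw [ht]
  fac s N := by
    apply ComodHom.ext
    apply LinearMap.ext
    intro x
    exact fdDesc_spec U s N x.1 x.2
  uniq s m hm := by
    apply ComodHom.ext
    apply LinearMap.ext
    intro u
    have hmem := someFJ_mem U u
    have h2 := LinearMap.congr_fun (congrArg ComodHom.f (hm (someFJ U u))) ⟨u, hmem⟩
    show m.f u = fdDesc U s u
    exact ((fdDesc_spec U s (someFJ U u) u hmem).trans h2.symm).symm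

end FwdDiagram

end
noncomputable section
open TensorProduct

variable {K : Type u} [Field K] {C : Type u}
  [AddCommGroup C] [Module K C] [Coalgebra K C]

section Rev

/-- The forgetful functor to modules. -/
def toMod : Comod K C ⥤ ModuleCat.{u} K where
  obj M := ModuleCat.of K M.carrier
  map f := ModuleCat.ofHom f.f
  map_id _ := rfl
  map_comp _ _ := rfl

variable {J : Type u} [SmallCategory J] (W : J ⥤ Comod K C)

/-- The diagram of underlying modules. -/
def Wmod : J ⥤ ModuleCat.{u} K := W ⋙ toMod

/-- The colimit of the underlying modules. -/
def Lpt : ModuleCat.{u} K := colimit (Wmod W)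

/-- The coprojection, as a linear map. -/
def ιL (j : J) : (W.obj j).carrier →ₗ[K] Lpt W := (colimit.ι (Wmod W) j).hom

lemma ιL_w {i j : J} (a : i ⟶ j) : ιL W j ∘ₗ (W.map a).f = ιL W i :=
  congrArg ModuleCat.Hom.hom (colimit.w (Wmod W) a)

/-- The cocone used to define the coaction on the colimit. -/
def κ : Cocone (Wmod W) where
  pt := ModuleCat.of K ((Lpt W : Type u) ⊗[K] C)
  ι :=
    { app := fun j => ModuleCat.ofHom (LinearMap.rTensor C (ιL W j) ∘ₗ (W.obj j).ρ)
      naturality := fun i j a => by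
        have h1 : (LinearMap.rTensor C (ιL W j) ∘ₗ (W.obj j).ρ) ∘ₗ (W.map a).f =
            LinearMap.rTensor C (ιL W i) ∘ₗ (W.obj i).ρ := by
          rw [LinearMap.comp_assoc, (W.map a).compat, ← LinearMap.comp_assoc,
            ← LinearMap.rTensor_comp, ιL_w]
        have h2 : (Wmod W).map a ≫
            ModuleCat.ofHom (LinearMap.rTensor C (ιL W j) ∘ₗ (W.obj j).ρ) =
            ModuleCat.ofHom (LinearMap.rTensor C (ιL W i) ∘ₗ (W.obj i).ρ) := ModuleCat.hom_ext h1
        exact h2.trans (Category.comp_id _).symm }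

/-- The coaction on the colimit. -/
def ρL : (Lpt W : Type u) →ₗ[K] (Lpt W : Type u) ⊗[K] C :=
  (colimit.desc (Wmod W) (κ W)).hom

lemma hρL (j : J) : ρL W ∘ₗ ιL W j = LinearMap.rTensor C (ιL W j) ∘ₗ (W.obj j).ρ :=
  congrArg ModuleCat.Hom.hom (colimit.ι_desc (κ W) j)

lemma Lhom_ext {Z : Type u} [AddCommGroup Z] [Module K Z]
    {φ ψ : (Lpt W : Type u) →ₗ[K] Z}
    (h : ∀ j, φ ∘ₗ ιL W j = ψ ∘ₗ ιL W j) : φ = ψ := by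
  have : (show Lpt W ⟶ ModuleCat.of K Z from ModuleCat.ofHom φ) =
      (show Lpt W ⟶ ModuleCat.of K Z from ModuleCat.ofHom ψ) := by
    apply colimit.hom_ext
    intro j
    exact ModuleCat.hom_ext (h j)
  exact congrArg ModuleCat.Hom.hom this

/-- The colimit as a comodule. -/
def Lc : Comod K C where
  carrier := (Lpt W : Type u)
  ρ := ρL W
  counit_comp' := by
    apply Lhom_ext
    intro j
    rw [LinearMap.id_comp]
    apply LinearMap.ext
    intro x
    have s0 := LinearMap.congr_fun (hρL W j) x
    have s1 := LinearMap.congr_fun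
      (show LinearMap.lTensor (Lpt W : Type u) (Coalgebra.counit (R := K) (A := C)) ∘ₗ
          LinearMap.rTensor C (ιL W j) =
        LinearMap.rTensor K (ιL W j) ∘ₗ
          LinearMap.lTensor (W.obj j).carrier (Coalgebra.counit (R := K) (A := C)) from by
        rw [LinearMap.lTensor_comp_rTensor, LinearMap.rTensor_comp_lTensor]) ((W.obj j).ρ x)
    have s2 := LinearMap.congr_fun (rid_natural (K := K) (ιL W j))
      (LinearMap.lTensor (W.obj j).carrier (Coalgebra.counit (R := K) (A := C)) ((W.obj j).ρ x))
    have s3 := LinearMap.congr_fun (W.obj j).counit_comp' x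
    simp only [LinearMap.comp_apply, LinearMap.id_apply] at s0 s1 s2 s3 ⊢
    rw [s0, s1, ← s2, s3]
  coassoc' := by
    apply Lhom_ext
    intro j
    apply LinearMap.ext
    intro x
    have s0 := LinearMap.congr_fun (hρL W j) x
    have s1 := LinearMap.congr_fun
      (show LinearMap.rTensor C (ρL W) ∘ₗ LinearMap.rTensor C (ιL W j) =
          LinearMap.rTensor C (LinearMap.rTensor C (ιL W j)) ∘ₗ
            LinearMap.rTensor C (W.obj j).ρ from by
        rw [← LinearMap.rTensor_comp, hρL W j, LinearMap.rTensor_comp]) ((W.obj j).ρ x)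
    have s2 := LinearMap.congr_fun (assoc_natural (K := K) (ιL W j) C C)
      (LinearMap.rTensor C (W.obj j).ρ ((W.obj j).ρ x))
    have s3 := LinearMap.congr_fun (W.obj j).coassoc' x
    have s4 := LinearMap.congr_fun
      (show LinearMap.lTensor (Lpt W : Type u) (Coalgebra.comul (R := K) (A := C)) ∘ₗ
          LinearMap.rTensor C (ιL W j) =
        LinearMap.rTensor (C ⊗[K] C) (ιL W j) ∘ₗ
          LinearMap.lTensor (W.obj j).carrier (Coalgebra.comul (R := K) (A := C)) from by
        rw [LinearMap.lTensor_comp_rTensor, LinearMap.rTensor_comp_lTensor]) ((W.obj j).ρ x)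
    simp only [LinearMap.comp_apply] at s0 s1 s2 s3 s4 ⊢
    rw [s0, s1, s2, s3, s4]

/-- The cocone over `W` with point the comodule structure on the module colimit. -/
def ccL : Cocone W where
  pt := Lc W
  ι :=
    { app := fun j => ⟨ιL W j, hρL W j⟩
      naturality := fun i j a => by
        apply ComodHom.ext
        show ιL W j ∘ₗ (W.map a).f = LinearMap.id ∘ₗ ιL W i
        rw [LinearMap.id_comp]
        exact ιL_w W a }

variable {W}

lemma ιL_inj [IsFiltered J]
    (hmono : ∀ {i j : J} (f : i ⟶ j), Function.Injective (W.map f).f) (j : J) :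
    Function.Injective (ιL W j) := by
  intro x y hxy
  have hty := isColimitOfPreserves (forget (ModuleCat.{u} K)) (colimit.isColimit (Wmod W))
  have heq : ((forget (ModuleCat.{u} K)).mapCocone (colimit.cocone (Wmod W))).ι.app j
        (show (Wmod W ⋙ forget (ModuleCat.{u} K)).obj j from x) =
      ((forget (ModuleCat.{u} K)).mapCocone (colimit.cocone (Wmod W))).ι.app j
        (show (Wmod W ⋙ forget (ModuleCat.{u} K)).obj j from y) := hxy
  obtain ⟨k, f, g, hfg⟩ :=
    (Types.FilteredColimit.isColimit_eq_iff (Wmod W ⋙ forget (ModuleCat.{u} K)) hty).mp heq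
  have hco := IsFiltered.coeq_condition f g
  apply hmono (f ≫ IsFiltered.coeqHom f g)
  have h1 : (W.map (f ≫ IsFiltered.coeqHom f g)).f x =
      (W.map (IsFiltered.coeqHom f g)).f ((W.map f).f x) := by
    rw [W.map_comp]
    rfl
  have h2 : (W.map (g ≫ IsFiltered.coeqHom f g)).f y =
      (W.map (IsFiltered.coeqHom f g)).f ((W.map g).f y) := by
    rw [W.map_comp]
    rfl
  have hfg' : (W.map f).f x = (W.map g).f y := hfg
  rw [h1, hfg', ← h2, ← hco]

variable (W)

section Abstract

lemma leg_inj [IsFiltered J] (c : Cocone W) (hc : IsColimit c)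
    (hmono : ∀ {i j : J} (f : i ⟶ j), Function.Injective (W.map f).f) (j : J) :
    Function.Injective (c.ι.app j).f := by
  have hfac := hc.fac (ccL W) j
  have : (hc.desc (ccL W)).f ∘ₗ (c.ι.app j).f = ιL W j := congrArg ComodHom.f hfac
  have hcomp : ιL W j = (hc.desc (ccL W)).f ∘ₗ (c.ι.app j).f := this.symm
  intro x y hxy
  apply ιL_inj hmono j
  have h1 := LinearMap.congr_fun this x
  have h2 := LinearMap.congr_fun this y
  simp only [LinearMap.comp_apply] at h1 h2
  exact (h1.symm.trans (congrArg (hc.desc (ccL W)).f hxy)).trans h2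

/-- Cocone leg of a comodule cocone, retyped as a plain linear map. -/
def legS (c : Cocone W) (j : J) : (W.obj j).carrier →ₗ[K] c.pt.carrier :=
  (c.ι.app j).f

lemma leg_jointly_surj [IsFiltered J] (c : Cocone W) (hc : IsColimit c) (x : c.pt.carrier) :
    ∃ (j : J) (y : (W.obj j).carrier), (c.ι.app j).f y = x := by
  haveI : Nonempty J := IsFiltered.nonempty
  set V : Submodule K c.pt.carrier := ⨆ j, LinearMap.range (legS W c j) with hV
  have hle : ∀ j, LinearMap.range (legS W c j) ≤ V := fun j =>
    le_trans (le_iSup (fun j => LinearMap.range (legS W c j)) j) (le_of_eq hV.symm)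
  have hVstab : IsSubcomod c.pt V := by
    intro z hz
    have hsub : V ≤ Submodule.comap c.pt.ρ
        (LinearMap.range (LinearMap.rTensor C V.subtype)) := by
      rw [hV]
      apply iSup_le
      intro j w hw
      obtain ⟨y, rfl⟩ := hw
      have compat : c.pt.ρ (legS W c j y) =
          LinearMap.rTensor C (legS W c j) ((W.obj j).ρ y) := by
        have := LinearMap.congr_fun (c.ι.app j).compat y
        simp only [LinearMap.comp_apply] at this
        exact this
      set codR : (W.obj j).carrier →ₗ[K] V :=
        LinearMap.codRestrict V (legS W c j) (fun z => hle j ⟨z, rfl⟩) with hcodR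
      have hcompose : LinearMap.rTensor C V.subtype ∘ₗ LinearMap.rTensor C codR =
          LinearMap.rTensor C (legS W c j) := by
        rw [← LinearMap.rTensor_comp, hcodR, LinearMap.subtype_comp_codRestrict]
      refine Submodule.mem_comap.mpr
        ⟨LinearMap.rTensor C codR ((W.obj j).ρ y), ?_⟩
      have hc2 := LinearMap.congr_fun hcompose ((W.obj j).ρ y)
      simp only [LinearMap.comp_apply] at hc2
      rw [hc2]
      exact compat.symm
    exact hsub hz
  -- factor the cocone through the subcomodule on V
  have hlift : ∀ j, ∃ h : W.obj j ⟶ Comod.sub hVstab, h ≫ subIncl hVstab = c.ι.app j := by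
    intro j
    apply lift_of_injective (subIncl hVstab) V.injective_subtype (c.ι.app j)
    intro z
    show _ ∈ LinearMap.range V.subtype
    rw [Submodule.range_subtype]
    exact hle j ⟨z, rfl⟩
  set s' : Cocone W :=
    { pt := Comod.sub hVstab
      ι :=
        { app := fun j => (hlift j).choose
          naturality := fun i j a => by
            apply cancel_injective (subIncl hVstab) V.injective_subtype
            rw [Category.assoc, (hlift j).choose_spec, c.w a]
            simp only [Functor.const_obj_map]
            rw [Category.comp_id ((hlift i).choose)]
            exact ((hlift i).choose_spec).symm } } with hs'
  have hid : hc.desc s' ≫ subIncl hVstab = 𝟙 c.pt := by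
    apply hc.hom_ext
    intro j
    rw [← Category.assoc, hc.fac s' j]
    have hci : c.ι.app j ≫ 𝟙 c.pt = c.ι.app j := Category.comp_id _
    rw [hci]
    exact (hlift j).choose_spec
  have hmemV : x ∈ V := by
    have hx := LinearMap.congr_fun (congrArg ComodHom.f hid) x
    simp only [ComodHom.comp_f, ComodHom.id_f, LinearMap.comp_apply,
      LinearMap.id_apply] at hx
    have hx' : V.subtype ((hc.desc s').f x) = x := hx
    exact hx' ▸ ((hc.desc s').f x).2
  have hdir : Directed (· ≤ ·) (fun j => LinearMap.range (legS W c j)) := by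
    intro i j
    obtain ⟨k, f, g, -⟩ := IsFilteredOrEmpty.cocone_objs i j
    refine ⟨k, ?_, ?_⟩
    · have hwf : legS W c i = legS W c k ∘ₗ (W.map f).f := by
        have := congrArg ComodHom.f (c.w f)
        exact this.symm
      show LinearMap.range (legS W c i) ≤ LinearMap.range (legS W c k)
      rw [hwf]
      exact LinearMap.range_comp_le_range _ _
    · have hwg : legS W c j = legS W c k ∘ₗ (W.map g).f := by
        have := congrArg ComodHom.f (c.w g)
        exact this.symm
      show LinearMap.range (legS W c j) ≤ LinearMap.range (legS W c k)
      rw [hwg]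
      exact LinearMap.range_comp_le_range _ _
  rw [hV] at hmemV
  obtain ⟨j, hj⟩ := (Submodule.mem_iSup_of_directed _ hdir).mp hmemV
  obtain ⟨y, hy⟩ := hj
  exact ⟨j, y, hy⟩

end Abstract

end Rev

end

/-- a right `C`-comodule is a finitely generated object of the category of
comodules (i.e. `Hom(U, -)` preserves filtered colimits of systems of monomorphisms) if and
only if it is finite dimensional over `K`. -/
theorem finitely_generated_iff_finiteDimensional
    {K : Type u} [Field K] {C : Type u}
    [AddCommGroup C] [Module K C] [Coalgebra K C] (U : Comod K C) :
    (∀ (J : Type u) (_ : SmallCategory J) (_ : IsFiltered J) (W : J ⥤ Comod K C),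
        (∀ {i j : J} (f : i ⟶ j), Mono (W.map f)) →
        ∀ (c : Cocone W), IsColimit c →
          Nonempty (IsColimit ((coyoneda.obj (Opposite.op U)).mapCocone c)))
      ↔ FiniteDimensional K U.carrier := by
  constructor
  · -- finitely generated implies finite dimensional
    intro H
    obtain ⟨hcol⟩ := H (FJ U) inferInstance inferInstance (WFD U)
      (fun {i j} f => mono_of_injective ((WFD U).map f)
        (Submodule.inclusion_injective (leOfHom f))) (ccFD U) (isColimitFD U)
    obtain ⟨j, f, hf⟩ := Types.jointly_surjective
      (WFD U ⋙ coyoneda.obj (Opposite.op U)) hcol (𝟙 U)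
    have hf' : f ≫ (ccFD U).ι.app j = 𝟙 U := hf
    have hdf := congrArg ComodHom.f hf'
    have hinj : Function.Injective f.f := by
      intro a b hab
      have ha := LinearMap.congr_fun hdf a
      have hb := LinearMap.congr_fun hdf b
      simp only [ComodHom.comp_f, ComodHom.id_f, LinearMap.comp_apply,
        LinearMap.id_apply] at ha hb
      have ha' : (((ccFD U).ι.app j).f (f.f a) : U.carrier) = a := ha
      have hb' : (((ccFD U).ι.app j).f (f.f b) : U.carrier) = b := hb
      rw [← ha', ← hb', hab]
    haveI : FiniteDimensional K (((WFD U).obj j).carrier) := j.2.2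
    exact FiniteDimensional.of_injective f.f hinj
  · -- finite dimensional implies finitely generated
    intro fd J hJ
    letI := hJ
    intro hfil
    haveI := hfil
    intro W hmono c hc
    classical
    have hWinj : ∀ {i j : J} (f : i ⟶ j), Function.Injective (W.map f).f :=
      fun {i j} f => by
        haveI := hmono f
        exact injective_of_mono (W.map f)
    have hleginj : ∀ j, Function.Injective (c.ι.app j).f := leg_inj W c hc hWinj
    refine ⟨Types.FilteredColimit.isColimitOf _ _ ?_ ?_⟩
    · -- joint surjectivity
      intro x
      -- `x : U ⟶ c.pt`
      have hfg : (⊤ : Submodule K U.carrier).FG := Module.finite_def.mp fd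
      obtain ⟨s, hs⟩ := hfg
      set jfun : U.carrier → J := fun v => (leg_jointly_surj W c hc (x.f v)).choose with hjfun
      set O : Finset J := s.image jfun with hO
      obtain ⟨S, hS⟩ := IsFiltered.sup_objs_exists O
      have hmemS : ∀ v ∈ s, x.f v ∈ LinearMap.range (legS W c S) := by
        intro v hv
        obtain ⟨y, hy⟩ := (leg_jointly_surj W c hc (x.f v)).choose_spec
        have ht : Nonempty (jfun v ⟶ S) := hS (Finset.mem_image_of_mem jfun hv)
        obtain ⟨t⟩ := ht
        have hw : legS W c (jfun v) = legS W c S ∘ₗ (W.map t).f :=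
          (congrArg ComodHom.f (c.w t)).symm
        refine ⟨(W.map t).f y, ?_⟩
        have : legS W c (jfun v) y = x.f v := hy
        rw [← this, hw]
        rfl
      have hrange : LinearMap.range x.f ≤ LinearMap.range (legS W c S) := by
        rw [LinearMap.range_eq_map, ← hs, Submodule.map_span, Submodule.span_le]
        rintro _ ⟨v, hv, rfl⟩
        exact hmemS v hv
      have hr : ∀ u, x.f u ∈ LinearMap.range (c.ι.app S).f := fun u =>
        hrange (LinearMap.mem_range_self x.f u)
      obtain ⟨h, hh⟩ := lift_of_injective (c.ι.app S) (hleginj S) x hr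
      exact ⟨S, h, hh.symm⟩
    · -- eventual equality
      intro i j xi xj hx
      have hx' : xi ≫ c.ι.app i = xj ≫ c.ι.app j := hx
      obtain ⟨k, f, g, -⟩ := IsFilteredOrEmpty.cocone_objs i j
      refine ⟨k, f, g, ?_⟩
      show xi ≫ W.map f = xj ≫ W.map g
      apply cancel_injective (c.ι.app k) (hleginj k)
      rw [Category.assoc, Category.assoc, c.w f, c.w g]
      exact hx'

end Formal
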